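/- Let (C,R) be a directed graph with ℓ = t = 1 that is not strongly connected and has |C'| = 1, and let j_1, j_2 ∈ C'' be such that j_1 ∈ W(j_2). Then W(j_1) ⊆ W(j_2). -/

import Mathlib

open Finset

/-- Reachability (existence of a directed walk) in the directed graph with arc set `R`. -/
def Reach {c : ℕ} (R : Finset (Fin c × Fin c)) (a b : Fin c) : Prop :=
  Relation.ReflTransGen (fun x y => (x, y) ∈ R) a b

/-- `p` is a directed path in the graph with arc set `R`. -/
def IsDipath {c : ℕ} (R : Finset (Fin c × Fin c)) (p : List (Fin c)) : Prop :=
  p ≠ [] ∧ p.Nodup ∧ p.Chain' (fun a b => (a, b) ∈ R)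

/-- `p` is a directed path from `a` to `b` in the graph with arc set `R`. -/
def IsDipathFromTo {c : ℕ} (R : Finset (Fin c × Fin c)) (p : List (Fin c))
    (a b : Fin c) : Prop :=
  IsDipath R p ∧ p.head? = some a ∧ p.getLast? = some b

/-- There is a directed path from `a` to `b` all of whose intermediate steps stay in `S`
(for `a ∈ S` this says that there is a directed path from `a` to `b` with vertex set
contained in `S`). -/
def ReachIn {c : ℕ} (R : Finset (Fin c × Fin c)) (S : Finset (Fin c))
    (a b : Fin c) : Prop :=
  Relation.ReflTransGen (fun x y => (x, y) ∈ R ∧ x ∈ S ∧ y ∈ S) a b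

/-- The set of arcs of `R` entering the vertex set `U`. -/
def arcsIn {c : ℕ} (R : Finset (Fin c × Fin c)) (U : Finset (Fin c)) :
    Finset (Fin c × Fin c) :=
  R.filter (fun a => a.1 ∉ U ∧ a.2 ∈ U)

/-- The set of arcs of `R` leaving the vertex set `U`. -/
def arcsOut {c : ℕ} (R : Finset (Fin c × Fin c)) (U : Finset (Fin c)) :
    Finset (Fin c × Fin c) :=
  R.filter (fun a => a.1 ∈ U ∧ a.2 ∉ U)

/-- For a graph whose unique absorbing strong component is `{r}` (so `C'' = C \ {r}`),
`Uset R r i = U(i) = {k ∈ C : every directed path from k to r traverses i}`. -/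
noncomputable def Uset {c : ℕ} (R : Finset (Fin c × Fin c)) (r i : Fin c) :
    Finset (Fin c) :=
  @Finset.filter _ (fun k => ∀ p : List (Fin c), IsDipathFromTo R p k r → i ∈ p)
    (Classical.decPred _) Finset.univ

/-- `U ∈ C''_{j-inarb}`: `U ⊆ C'' = C \ {r}`, every vertex of `U` has a directed path to
`j` with vertex set contained in `U`, and every vertex of `C'' \ U` has a directed path
to `C' = {r}` with vertex set contained in `C \ U`. -/
def Jinarb {c : ℕ} (R : Finset (Fin c × Fin c)) (r j : Fin c)
    (U : Finset (Fin c)) : Prop :=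
  U ⊆ Finset.univ.erase r ∧
    (∀ i' ∈ U, ReachIn R U i' j) ∧
    (∀ i' ∈ Finset.univ.erase r \ U, ReachIn R (Finset.univ \ U) i' r)

/-- The vertex set of the strong component of the graph containing `j`. -/
noncomputable def SCC {c : ℕ} (R : Finset (Fin c × Fin c)) (j : Fin c) :
    Finset (Fin c) :=
  @Finset.filter _ (fun k => Reach R j k ∧ Reach R k j) (Classical.decPred _) Finset.univ

/-- `I` is a subset of `C'' = C \ {r}` such that the sets `U(i)`, `i ∈ I`, are pairwise
disjoint with union `U`. -/
def IsPartitionInto {c : ℕ} (R : Finset (Fin c × Fin c)) (r : Fin c)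
    (U I : Finset (Fin c)) : Prop :=
  I ⊆ Finset.univ.erase r ∧
    (↑I : Set (Fin c)).PairwiseDisjoint (fun i => Uset R r i) ∧
    U = I.biUnion (Uset R r)

/-- `W(j) = ⋃_{U ∈ C''_{j-inarb}} I_U`, where `I_U` is the unique subset of `C''` with
`U = ⋃*_{i ∈ I_U} U(i)` (pairwise disjoint union). -/
def Wset {c : ℕ} (R : Finset (Fin c × Fin c)) (r j : Fin c) : Set (Fin c) :=
  {i | ∃ U I : Finset (Fin c), Jinarb R r j U ∧ IsPartitionInto R r U I ∧ i ∈ I}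

/-- `U(C''(j)) = {k ∈ C'' : every directed path from k to r traverses C''(j)}`. -/
noncomputable def UsetSC {c : ℕ} (R : Finset (Fin c × Fin c)) (r j : Fin c) :
    Finset (Fin c) :=
  @Finset.filter _
    (fun k => ∀ p : List (Fin c), IsDipathFromTo R p k r → ∃ x ∈ p, x ∈ SCC R j)
    (Classical.decPred _) (Finset.univ.erase r)



/-!
Everything rests on a description of `W(j)` by dominators. Call `x ≠ i` a proper dominator
of `i` if `i ∈ U(x)`. Then `i ∈ W(j)` iff `i ≠ r` and some walk from `i` to `j` avoids all
proper dominators of `i`. Given such a walk, let `B` be the set of vertices on such walks and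
`U` the set of vertices all of whose paths to `r` meet `B`: `U` lies in `C''_{j-inarb}`, the
sets `U(x)` form a laminar family, and `I_U` is the set of maximal `x ∈ U`, among them `i`.
Conversely, a proper dominator `x` of `i` inside `U ∈ C''_{j-inarb}` lies in some `U(m)`,
`m ∈ I_U`; then `i ∈ U(x) ⊆ U(m)` forces `m = i` and then `x = i`.

The inclusion follows: every vertex of a walk from `i` to `j₁` avoiding a proper dominator `x`
of `i` lies in `U(x)`, so `x` properly dominates `j₁`; a walk from `i` to `j₁` followed by one
from `j₁` to `j₂` therefore avoids the proper dominators of `i`.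
-/

section Paths

variable {c : ℕ} {R : Finset (Fin c × Fin c)}

lemma isDipathFromTo_singleton (a : Fin c) : IsDipathFromTo R [a] a a :=
  ⟨⟨List.cons_ne_nil _ _, List.nodup_singleton a, List.isChain_singleton a⟩, rfl, rfl⟩

lemma IsDipathFromTo.cons {p : List (Fin c)} {a v b : Fin c} (hp : IsDipathFromTo R p v b)
    (hav : (a, v) ∈ R) (ha : a ∉ p) : IsDipathFromTo R (a :: p) a b := by
  obtain ⟨⟨hne, hnd, hch⟩, hhead, hlast⟩ := hp
  cases p with
  | nil => exact absurd rfl hne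
  | cons x t =>
    obtain rfl : x = v := by simpa using hhead
    refine ⟨⟨List.cons_ne_nil _ _, List.nodup_cons.mpr ⟨ha, hnd⟩,
      List.isChain_cons_cons.mpr ⟨hav, hch⟩⟩, rfl, ?_⟩
    rwa [List.getLast?_cons_cons]

lemma IsDipathFromTo.exists_suffix {p : List (Fin c)} {a b x : Fin c}
    (hp : IsDipathFromTo R p a b) (hx : x ∈ p) :
    ∃ q, IsDipathFromTo R q x b ∧ q ⊆ p ∧ (x ≠ a → a ∉ q) := by
  obtain ⟨s, t, rfl⟩ := List.append_of_mem hx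
  obtain ⟨⟨-, hnd, hch⟩, hhead, hlast⟩ := hp
  refine ⟨x :: t, ⟨⟨List.cons_ne_nil _ _, (List.nodup_append'.mp hnd).2.1,
    (List.isChain_append.mp hch).2.1⟩, rfl, ?_⟩, List.subset_append_right _ _, ?_⟩
  · rw [← hlast, List.getLast?_append_cons]
  · intro hxa hat
    cases s with
    | nil => exact hxa (by simpa using hhead)
    | cons a' s' =>
      obtain rfl : a' = a := by simpa using hhead
      exact (List.nodup_append'.mp hnd).2.2 List.mem_cons_self hat

lemma IsDipathFromTo.reachIn {S : Finset (Fin c)} {p : List (Fin c)} {a b : Fin c}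
    (hp : IsDipathFromTo R p a b) (hS : ∀ v ∈ p, v ∈ S) : ReachIn R S a b := by
  obtain ⟨⟨hne, -, hch⟩, hhead, hlast⟩ := hp
  rw [List.head?_eq_some_head hne, Option.some_inj] at hhead
  rw [List.getLast?_eq_some_getLast hne, Option.some_inj] at hlast
  rw [← hhead, ← hlast]
  exact List.relationReflTransGen_of_exists_isChain p
    (hch.imp_of_mem_imp fun x y hx hy hxy => ⟨hxy, hS x hx, hS y hy⟩) hne

lemma Reach.exists_isDipathFromTo {a b : Fin c} (h : Reach R a b) :
    ∃ p, IsDipathFromTo R p a b := by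
  induction h using Relation.ReflTransGen.head_induction_on with
  | refl => exact ⟨_, isDipathFromTo_singleton b⟩
  | @head a v hav _ ih =>
    obtain ⟨p, hp⟩ := ih
    by_cases ha : a ∈ p
    · obtain ⟨q, hq, -⟩ := hp.exists_suffix ha
      exact ⟨q, hq⟩
    · exact ⟨a :: p, hp.cons hav ha⟩

lemma ReachIn.mono {S T : Finset (Fin c)} (hST : S ⊆ T) {a b : Fin c}
    (h : ReachIn R S a b) : ReachIn R T a b :=
  Relation.ReflTransGen.mono (p := fun x y => (x, y) ∈ R ∧ x ∈ T ∧ y ∈ T)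
    (fun _ _ hxy => ⟨hxy.1, hST hxy.2.1, hST hxy.2.2⟩) a b h

lemma Reach.reachIn_univ {a b : Fin c} (h : Reach R a b) : ReachIn R univ a b :=
  Relation.ReflTransGen.mono (p := fun x y => (x, y) ∈ R ∧ x ∈ univ ∧ y ∈ univ)
    (fun _ _ hxy => ⟨hxy, mem_univ _, mem_univ _⟩) a b h

end Paths

section Dominators

variable {c : ℕ} {R : Finset (Fin c × Fin c)} {r : Fin c}

lemma mem_Uset {x k : Fin c} :
    k ∈ Uset R r x ↔ ∀ p : List (Fin c), IsDipathFromTo R p k r → x ∈ p := by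
  simp only [Uset, mem_filter, mem_univ, true_and]

lemma self_mem_Uset (x : Fin c) : x ∈ Uset R r x :=
  mem_Uset.2 fun _ hp => List.mem_of_mem_head? hp.2.1

lemma mem_Uset_root (k : Fin c) : k ∈ Uset R r r :=
  mem_Uset.2 fun _ hp => List.mem_of_mem_getLast? hp.2.2

lemma eq_of_root_mem_Uset {x : Fin c} (h : r ∈ Uset R r x) : x = r := by
  simpa using mem_Uset.1 h [r] (isDipathFromTo_singleton r)

lemma Uset_subset_Uset_of_mem {x m : Fin c} (hx : x ∈ Uset R r m) :
    Uset R r x ⊆ Uset R r m := by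
  intro k hk
  refine mem_Uset.2 fun p hp => ?_
  obtain ⟨q, hq, hqp, -⟩ := hp.exists_suffix (mem_Uset.1 hk p hp)
  exact hqp (mem_Uset.1 hx q hq)

lemma mem_Uset_of_step {x k v : Fin c} (hk : k ∈ Uset R r x) (hkx : k ≠ x)
    (hkv : (k, v) ∈ R) : v ∈ Uset R r x := by
  refine mem_Uset.2 fun p hp => ?_
  by_cases hkp : k ∈ p
  · obtain ⟨q, hq, hqp, -⟩ := hp.exists_suffix hkp
    exact hqp (mem_Uset.1 hk q hq)
  · rcases List.mem_cons.1 (mem_Uset.1 hk _ (hp.cons hkv hkp)) with rfl | hxp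
    · exact absurd rfl hkx
    · exact hxp

lemma mem_Uset_of_reachIn {S : Finset (Fin c)} {x k b : Fin c} (h : ReachIn R S k b)
    (hk : k ∈ Uset R r x) (hxS : x ∉ S) : b ∈ Uset R r x := by
  induction h using Relation.ReflTransGen.head_induction_on with
  | refl => exact hk
  | head hstep _ ih =>
    exact ih (mem_Uset_of_step hk (by rintro rfl; exact hxS hstep.2.1) hstep.1)

lemma notMem_Uset_of_reachIn {S : Finset (Fin c)} {x k : Fin c} (h : ReachIn R S k r)
    (hxS : x ∉ S) (hxr : x ≠ r) : k ∉ Uset R r x :=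
  fun hk => hxr (eq_of_root_mem_Uset (mem_Uset_of_reachIn h hk hxS))

lemma reachIn_sdiff_singleton_of_notMem_Uset {x k : Fin c} (h : k ∉ Uset R r x) :
    ReachIn R (univ \ {x}) k r := by
  obtain ⟨p, hp, hxp⟩ := not_forall₂.1 (mt mem_Uset.2 h)
  exact hp.reachIn fun v hv => by
    simpa using fun hvx : v = x => hxp (hvx ▸ hv)

lemma ReachIn.split_of_mem_Uset {S : Finset (Fin c)} {x k b : Fin c} (h : ReachIn R S k b)
    (hk : k ∈ Uset R r x) (hb : b ∉ Uset R r x) :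
    ReachIn R (S ∩ Uset R r x) k x ∧ ReachIn R S x b := by
  induction h using Relation.ReflTransGen.head_induction_on with
  | refl => exact absurd hk hb
  | @head a v hstep hrest ih =>
    by_cases hax : a = x
    · subst hax
      exact ⟨.refl, .head hstep hrest⟩
    · have hv := mem_Uset_of_step hk hax hstep.1
      exact ⟨.head ⟨hstep.1, mem_inter.2 ⟨hstep.2.1, hk⟩, mem_inter.2 ⟨hstep.2.2, hv⟩⟩
        (ih hv).1, (ih hv).2⟩

lemma eq_of_mem_Uset_of_mem_Uset (hreach : ∀ k, Reach R k r) {x i : Fin c}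
    (hx : x ∈ Uset R r i) (hi : i ∈ Uset R r x) : x = i := by
  by_contra hxi
  obtain ⟨p, hp⟩ := (hreach i).exists_isDipathFromTo
  obtain ⟨q, hq, -, hiq⟩ := hp.exists_suffix (mem_Uset.1 hi p hp)
  exact hiq hxi (mem_Uset.1 hx q hq)

lemma mem_Uset_or_mem_Uset (hreach : ∀ k, Reach R k r) {k m m' : Fin c}
    (hm : k ∈ Uset R r m) (hm' : k ∈ Uset R r m') :
    m ∈ Uset R r m' ∨ m' ∈ Uset R r m := by
  rcases eq_or_ne m r with rfl | hmr
  · exact Or.inr (mem_Uset_root m')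
  -- Otherwise `k` reaches `m` inside `U(m)`, hence avoiding `m'`, and from `m` there is a path
  -- to `r` avoiding `m'`.
  by_contra! h
  have hkm : ReachIn R (univ \ {m'}) k m := by
    have hrm : r ∉ Uset R r m := fun hr => hmr (eq_of_root_mem_Uset hr)
    refine ((hreach k).reachIn_univ.split_of_mem_Uset hm hrm).1.mono fun z hz => ?_
    simpa using fun hzm : z = m' => h.2 (hzm ▸ (mem_inter.1 hz).2)
  exact notMem_Uset_of_reachIn (hkm.trans (reachIn_sdiff_singleton_of_notMem_Uset h.1))
    (by simp) (by rintro rfl; exact h.1 (mem_Uset_root m)) hm'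

end Dominators

section Blocking

variable {c : ℕ} {R : Finset (Fin c × Fin c)} {r : Fin c}

open Classical in
noncomputable def blockedBy (R : Finset (Fin c × Fin c)) (r : Fin c) (B : Finset (Fin c)) :
    Finset (Fin c) :=
  univ.filter fun k => ¬ ReachIn R (univ \ B) k r

lemma notMem_blockedBy {B : Finset (Fin c)} {k : Fin c} :
    k ∉ blockedBy R r B ↔ ReachIn R (univ \ B) k r := by
  simp [blockedBy]

lemma blockedBy_subset_erase (B : Finset (Fin c)) : blockedBy R r B ⊆ univ.erase r :=
  fun k hk => mem_erase.2 ⟨by rintro rfl; exact notMem_blockedBy.2 .refl hk, mem_univ k⟩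

lemma subset_blockedBy {B : Finset (Fin c)} (hrB : r ∉ B) : B ⊆ blockedBy R r B := by
  intro k hkB
  by_contra hk
  rcases (notMem_blockedBy.1 hk).cases_head with rfl | ⟨_, hstep, -⟩
  · exact hrB hkB
  · exact (mem_sdiff.1 hstep.2.1).2 hkB

lemma mem_blockedBy_of_step {B : Finset (Fin c)} {a v : Fin c} (ha : a ∈ blockedBy R r B)
    (haB : a ∉ B) (hav : (a, v) ∈ R) (hvB : v ∉ B) : v ∈ blockedBy R r B := by
  by_contra hv
  exact notMem_blockedBy.2
    (.head ⟨hav, mem_sdiff.2 ⟨mem_univ a, haB⟩, mem_sdiff.2 ⟨mem_univ v, hvB⟩⟩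
      (notMem_blockedBy.1 hv)) ha

lemma reachIn_compl_blockedBy {B : Finset (Fin c)} {k : Fin c} (hk : k ∉ blockedBy R r B) :
    ReachIn R (univ \ blockedBy R r B) k r := by
  induction notMem_blockedBy.1 hk using Relation.ReflTransGen.head_induction_on with
  | refl => exact .refl
  | @head a v hstep hrest ih =>
    exact .head ⟨hstep.1, mem_sdiff.2 ⟨mem_univ a, notMem_blockedBy.2 (.head hstep hrest)⟩,
      mem_sdiff.2 ⟨mem_univ v, notMem_blockedBy.2 hrest⟩⟩ (ih (notMem_blockedBy.2 hrest))

lemma exists_reachIn_blockedBy (hreach : ∀ k, Reach R k r) {B : Finset (Fin c)} (hrB : r ∉ B)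
    {k : Fin c} (hk : k ∈ blockedBy R r B) : ∃ z ∈ B, ReachIn R (blockedBy R r B) k z := by
  induction hreach k using Relation.ReflTransGen.head_induction_on with
  | refl => exact absurd hk (notMem_blockedBy.2 .refl)
  | @head a v hav _ ih =>
    by_cases haB : a ∈ B
    · exact ⟨a, haB, .refl⟩
    have hv : v ∈ blockedBy R r B := by
      by_cases hvB : v ∈ B
      · exact subset_blockedBy hrB hvB
      · exact mem_blockedBy_of_step hk haB hav hvB
    obtain ⟨z, hzB, hvz⟩ := ih hv
    exact ⟨z, hzB, .head ⟨hav, hk, hv⟩ hvz⟩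

lemma Uset_subset_blockedBy {B : Finset (Fin c)} {x : Fin c} (hx : x ∈ blockedBy R r B) :
    Uset R r x ⊆ blockedBy R r B := by
  intro k hk
  by_contra hkB
  have hxr : x ≠ r := (mem_erase.1 (blockedBy_subset_erase B hx)).1
  have hrx : r ∉ Uset R r x := fun hr => hxr (eq_of_root_mem_Uset hr)
  exact notMem_blockedBy.2 ((notMem_blockedBy.1 hkB).split_of_mem_Uset hk hrx).2 hx

lemma jinarb_blockedBy (hreach : ∀ k, Reach R k r) {B : Finset (Fin c)} {j : Fin c}
    (hrB : r ∉ B) (hB : ∀ z ∈ B, ReachIn R B z j) : Jinarb R r j (blockedBy R r B) := by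
  refine ⟨blockedBy_subset_erase B, fun k hk => ?_, fun k hk => ?_⟩
  · obtain ⟨z, hzB, hkz⟩ := exists_reachIn_blockedBy hreach hrB hk
    exact hkz.trans ((hB z hzB).mono (subset_blockedBy hrB))
  · exact reachIn_compl_blockedBy (mem_sdiff.1 hk).2

end Blocking

section Maximals

variable {c : ℕ} {R : Finset (Fin c × Fin c)} {r : Fin c}

open Classical in
noncomputable def maximals (R : Finset (Fin c × Fin c)) (r : Fin c) (U : Finset (Fin c)) :
    Finset (Fin c) :=
  U.filter fun m => ∀ x ∈ U, m ∈ Uset R r x → x = m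

lemma mem_maximals {U : Finset (Fin c)} {m : Fin c} :
    m ∈ maximals R r U ↔ m ∈ U ∧ ∀ x ∈ U, m ∈ Uset R r x → x = m := by
  simp [maximals]

lemma exists_mem_maximals (hreach : ∀ k, Reach R k r) {U : Finset (Fin c)} {k : Fin c}
    (hk : k ∈ U) : ∃ m ∈ maximals R r U, k ∈ Uset R r m := by
  classical
  obtain ⟨m, hmT, hmax⟩ := exists_max_image (U.filter fun x => k ∈ Uset R r x)
    (fun x => #(Uset R r x)) ⟨k, mem_filter.2 ⟨hk, self_mem_Uset k⟩⟩
  obtain ⟨hmU, hkm⟩ := mem_filter.1 hmT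
  refine ⟨m, mem_maximals.2 ⟨hmU, fun x hxU hmx => ?_⟩, hkm⟩
  by_contra hxm
  have hsub := Uset_subset_Uset_of_mem hmx
  have hlt : #(Uset R r m) < #(Uset R r x) := card_lt_card ⟨hsub, fun h =>
    hxm (eq_of_mem_Uset_of_mem_Uset hreach (h (self_mem_Uset x)) hmx)⟩
  exact hlt.not_ge (hmax x (mem_filter.2 ⟨hxU, hsub hkm⟩))

lemma isPartitionInto_maximals (hreach : ∀ k, Reach R k r) {U : Finset (Fin c)}
    (hU : U ⊆ univ.erase r) (hclosed : ∀ x ∈ U, Uset R r x ⊆ U) :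
    IsPartitionInto R r U (maximals R r U) := by
  refine ⟨(filter_subset _ _).trans hU, fun m hm m' hm' hne => ?_, ?_⟩
  · obtain ⟨hmU, hmax⟩ := mem_maximals.1 hm
    obtain ⟨hm'U, hmax'⟩ := mem_maximals.1 hm'
    refine disjoint_left.2 fun k hkm hkm' => ?_
    rcases mem_Uset_or_mem_Uset hreach hkm hkm' with h | h
    · exact hne (hmax m' hm'U h).symm
    · exact hne (hmax' m hmU h)
  · ext k
    refine ⟨fun hk => ?_, fun hk => ?_⟩
    · obtain ⟨m, hm, hkm⟩ := exists_mem_maximals hreach hk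
      exact mem_biUnion.2 ⟨m, hm, hkm⟩
    · obtain ⟨m, hm, hkm⟩ := mem_biUnion.1 hk
      exact hclosed m (mem_maximals.1 hm).1 hkm

end Maximals

section Between

variable {c : ℕ} {R : Finset (Fin c × Fin c)}

open Classical in
noncomputable def between (R : Finset (Fin c × Fin c)) (S : Finset (Fin c)) (a b : Fin c) :
    Finset (Fin c) :=
  S.filter fun x => ReachIn R S a x ∧ ReachIn R S x b

lemma mem_between {S : Finset (Fin c)} {a b x : Fin c} :
    x ∈ between R S a b ↔ x ∈ S ∧ ReachIn R S a x ∧ ReachIn R S x b := by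
  simp [between]

lemma reachIn_between {S : Finset (Fin c)} {a b x : Fin c} (hax : ReachIn R S a x)
    (hxb : ReachIn R S x b) : ReachIn R (between R S a b) x b := by
  induction hxb using Relation.ReflTransGen.head_induction_on with
  | refl => exact .refl
  | @head y v hstep hrest ih =>
    have hav : ReachIn R S a v := hax.tail hstep
    exact .head ⟨hstep.1, mem_between.2 ⟨hstep.2.1, hax, .head hstep hrest⟩,
      mem_between.2 ⟨hstep.2.2, hav, hrest⟩⟩ (ih hav)

end Between

section Characterization

variable {c : ℕ} {R : Finset (Fin c × Fin c)} {r : Fin c}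

open Classical in
noncomputable def properDominators (R : Finset (Fin c × Fin c)) (r i : Fin c) :
    Finset (Fin c) :=
  univ.filter fun x => x ≠ i ∧ i ∈ Uset R r x

lemma mem_properDominators {i x : Fin c} :
    x ∈ properDominators R r i ↔ x ≠ i ∧ i ∈ Uset R r x := by
  simp [properDominators]

lemma notMem_blockedBy_of_mem_properDominators (hreach : ∀ k, Reach R k r)
    {i j x : Fin c} (hx : x ∈ properDominators R r i) :
    x ∉ blockedBy R r (between R (univ \ properDominators R r i) i j) := by
  obtain ⟨hxi, hix⟩ := mem_properDominators.1 hx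
  obtain ⟨p, hp⟩ := (hreach x).exists_isDipathFromTo
  refine notMem_blockedBy.2 (hp.reachIn fun v hv => mem_sdiff.2 ⟨mem_univ v, fun hvB => ?_⟩)
  -- A vertex `v` of the path lying in `B` would be in `U(x)`, but the path goes on from `v`
  -- to `r` without meeting `x` again.
  obtain ⟨hvS, hiv, -⟩ := mem_between.1 hvB
  have hvx : v ∈ Uset R r x := mem_Uset_of_reachIn hiv hix fun hxS => (mem_sdiff.1 hxS).2 hx
  obtain ⟨q, hq, -, hxq⟩ := hp.exists_suffix hv
  exact hxq (by rintro rfl; exact (mem_sdiff.1 hvS).2 hx) (mem_Uset.1 hvx q hq)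

lemma mem_Wset_of_reachIn (hreach : ∀ k, Reach R k r) {i j : Fin c} (hir : i ≠ r)
    (h : ReachIn R (univ \ properDominators R r i) i j) : i ∈ Wset R r j := by
  set B := between R (univ \ properDominators R r i) i j
  have hi : i ∈ univ \ properDominators R r i := by simp [mem_properDominators]
  have hrB : r ∉ B := fun hr => (mem_sdiff.1 (mem_between.1 hr).1).2
    (mem_properDominators.2 ⟨hir.symm, mem_Uset_root i⟩)
  have hiB : i ∈ B := mem_between.2 ⟨hi, .refl, h⟩
  have hB : ∀ z ∈ B, ReachIn R B z j := fun z hz =>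
    reachIn_between (mem_between.1 hz).2.1 (mem_between.1 hz).2.2
  have hmax : i ∈ maximals R r (blockedBy R r B) := by
    refine mem_maximals.2 ⟨subset_blockedBy hrB hiB, fun x hx hix => ?_⟩
    by_contra hxi
    exact notMem_blockedBy_of_mem_properDominators hreach
      (mem_properDominators.2 ⟨hxi, hix⟩) hx
  exact ⟨_, _, jinarb_blockedBy hreach hrB hB,
    isPartitionInto_maximals hreach (blockedBy_subset_erase B) fun _ => Uset_subset_blockedBy,
    hmax⟩

lemma reachIn_of_mem_Wset (hreach : ∀ k, Reach R k r) {i j : Fin c} (hi : i ∈ Wset R r j) :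
    i ≠ r ∧ ReachIn R (univ \ properDominators R r i) i j := by
  obtain ⟨U, I, ⟨-, hUj, -⟩, ⟨hIr, hdisj, rfl⟩, hiI⟩ := hi
  refine ⟨(mem_erase.1 (hIr hiI)).1, (hUj i ?_).mono fun x hx => ?_⟩
  · exact mem_biUnion.2 ⟨i, hiI, self_mem_Uset i⟩
  obtain ⟨m, hmI, hxm⟩ := mem_biUnion.1 hx
  refine mem_sdiff.2 ⟨mem_univ x, fun hx => ?_⟩
  obtain ⟨hxi, hix⟩ := mem_properDominators.1 hx
  have him : i ∈ Uset R r m := Uset_subset_Uset_of_mem hxm hix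
  obtain rfl : m = i := by
    by_contra hmi
    exact disjoint_left.1 (hdisj hmI hiI hmi) him (self_mem_Uset i)
  exact hxi (eq_of_mem_Uset_of_mem_Uset hreach hxm hix)

lemma mem_Wset_iff (hreach : ∀ k, Reach R k r) {i j : Fin c} :
    i ∈ Wset R r j ↔ i ≠ r ∧ ReachIn R (univ \ properDominators R r i) i j :=
  ⟨reachIn_of_mem_Wset hreach, fun h => mem_Wset_of_reachIn hreach h.1 h.2⟩

lemma properDominators_subset_of_reachIn {i j : Fin c}
    (h : ReachIn R (univ \ properDominators R r i) i j) :
    properDominators R r i ⊆ properDominators R r j := by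
  intro x hx
  obtain ⟨hxi, hix⟩ := mem_properDominators.1 hx
  refine mem_properDominators.2 ⟨?_, mem_Uset_of_reachIn h hix (by simp [hx])⟩
  rintro rfl
  rcases h.cases_tail with rfl | ⟨_, -, hstep⟩
  · exact hxi rfl
  · exact (mem_sdiff.1 hstep.2.2).2 hx

end Characterization

theorem stmt15_general {c : ℕ}
    (R : Finset (Fin c × Fin c))
    -- `{r} = C'` is the vertex set of the unique absorbing strong component (`ℓ = t = 1`):
    (r : Fin c)
    (hreach : ∀ k : Fin c, Reach R k r)
    (j1 j2 : Fin c)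
    (hmem : j1 ∈ Wset R r j2) :
    Wset R r j1 ⊆ Wset R r j2 := by
  intro i hi
  obtain ⟨hir, hij1⟩ := (mem_Wset_iff hreach).1 hi
  obtain ⟨-, hj1j2⟩ := (mem_Wset_iff hreach).1 hmem
  have hsub := properDominators_subset_of_reachIn hij1
  exact (mem_Wset_iff hreach).2
    ⟨hir, hij1.trans (hj1j2.mono (sdiff_subset_sdiff subset_rfl hsub))⟩

theorem stmt15 {c : ℕ}
    (R : Finset (Fin c × Fin c)) (hloop : ∀ v : Fin c, (v, v) ∉ R)
    -- `{r} = C'` is the vertex set of the unique absorbing strong component (`ℓ = t = 1`):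
    (r : Fin c)
    (habs : ∀ p ∈ R, p.1 ≠ r)
    (hreach : ∀ k : Fin c, Reach R k r)
    (hweak : ∀ a b : Fin c,
      Relation.ReflTransGen (fun x y => (x, y) ∈ R ∨ (y, x) ∈ R) a b)
    (hnsc : ¬ ∀ a b : Fin c, Reach R a b)
    (j1 j2 : Fin c) (hj1 : j1 ≠ r) (hj2 : j2 ≠ r)
    (hmem : j1 ∈ Wset R r j2) :
    Wset R r j1 ⊆ Wset R r j2 :=
  stmt15_general R r hreach j1 j2 hmem
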